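/- Let F be a totally complex number field of degree 2k, Λ_b = α_b ψ(O_F) ⊂ ℂ^k, and R = diag(R₁,…,R_k) with |R_i|² = 1/ρ_b + |h_i|². Then the minimum distance of the received lattice satisfies d_R² := min_{λ∈Λ_b\{0}} ∑_i |R_i λ_i|² ≥ α_b² k ∏_{i=1}^k (1/ρ_b + |h_i|²)^{1/k}. -/

import Mathlib

/-!
With `aᵢ = 1/ρ_b + ‖hᵢ‖²` and `bᵢ = (α_b ‖σ i x‖)²`, AM-GM gives
`∑ aᵢ bᵢ ≥ k ∏ (aᵢ bᵢ)^(1/k) = k ∏ aᵢ^(1/k) · (∏ bᵢ)^(1/k)`.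
Each `σ i` together with its conjugate is one complex place of `F`, of multiplicity two,
so `∏ ‖σ i x‖² = |N_{F/ℚ}(x)|`, which is at least `1` for a nonzero algebraic integer;
hence `(∏ bᵢ)^(1/k) ≥ α_b²`.
-/

open NumberField Finset

namespace Real

variable {ι : Type*} [Fintype ι]

theorem card_mul_prod_rpow_le_sum {z : ι → ℝ} (hz : ∀ i, 0 ≤ z i) :
    Fintype.card ι * ∏ i, z i ^ ((1 : ℝ) / Fintype.card ι) ≤ ∑ i, z i := by
  rcases isEmpty_or_nonempty ι with hι | hι
  · simp
  have hn : (0 : ℝ) < Fintype.card ι := Nat.cast_pos.mpr Fintype.card_pos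
  have amgm := geom_mean_le_arith_mean_weighted univ (fun _ ↦ 1 / Fintype.card ι) z
    (fun _ _ ↦ by positivity) (by simp [hn.ne']) (fun i _ ↦ hz i)
  rw [← mul_sum] at amgm
  calc (Fintype.card ι : ℝ) * ∏ i, z i ^ ((1 : ℝ) / Fintype.card ι)
      ≤ Fintype.card ι * (1 / Fintype.card ι * ∑ i, z i) := by gcongr
    _ = ∑ i, z i := by field_simp

theorem card_mul_mul_prod_rpow_le_sum_mul {a b : ι → ℝ} {c : ℝ} (ha : ∀ i, 0 ≤ a i)
    (hb : ∀ i, 0 ≤ b i) (hc : 0 ≤ c) (hcb : c ^ Fintype.card ι ≤ ∏ i, b i) :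
    Fintype.card ι * c * ∏ i, a i ^ ((1 : ℝ) / Fintype.card ι) ≤ ∑ i, a i * b i := by
  obtain hn | hn := eq_or_ne (Fintype.card ι) 0
  · have := Fintype.card_eq_zero_iff.mp hn
    simp
  set r : ℝ := 1 / Fintype.card ι with hr
  have hcr : c = (c ^ Fintype.card ι) ^ r := by
    rw [hr, one_div, pow_rpow_inv_natCast hc hn]
  calc Fintype.card ι * c * ∏ i, a i ^ r
      = Fintype.card ι * ((∏ i, a i ^ r) * (c ^ Fintype.card ι) ^ r) := by rw [← hcr]; ring
    _ ≤ Fintype.card ι * ((∏ i, a i ^ r) * (∏ i, b i) ^ r) := by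
      gcongr
      exact prod_nonneg fun i _ ↦ rpow_nonneg (ha i) r
    _ = Fintype.card ι * ∏ i, (a i * b i) ^ r := by
      rw [← finsetProd_rpow _ _ (fun i _ ↦ hb i), ← prod_mul_distrib]
      simp only [mul_rpow (ha _) (hb _)]
    _ ≤ ∑ i, a i * b i := card_mul_prod_rpow_le_sum fun i ↦ mul_nonneg (ha i) (hb i)

end Real

namespace NumberField

variable {K : Type*} [Field K] [NumberField K]

theorem RingOfIntegers.one_le_abs_norm {x : 𝓞 K} (hx : x ≠ 0) :
    1 ≤ |Algebra.norm ℚ (x : K)| := by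
  rw [← Algebra.coe_norm_int, ← Int.cast_one, ← Int.cast_abs, Int.cast_le]
  exact Int.one_le_abs (Algebra.norm_ne_zero_iff.mpr hx)

namespace InfinitePlace

variable {ι : Type*} {σ : ι → K →+* ℂ}

omit [NumberField K] in
theorem bijective_mk_of_existsUnique
    (hσ : ∀ φ : K →+* ℂ, ∃! i, φ = σ i ∨ φ = (starRingEnd ℂ).comp (σ i)) :
    Function.Bijective fun i ↦ mk (σ i) := by
  refine ⟨fun i j hij ↦ ?_, fun w ↦ ?_⟩
  · exact (hσ (σ i)).unique (Or.inl rfl) ((mk_eq_iff.mp hij.symm).imp Eq.symm Eq.symm)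
  · obtain ⟨i, hi, -⟩ := hσ w.embedding
    exact ⟨i, (mk_eq_iff.mpr (hi.imp Eq.symm Eq.symm)).trans (mk_embedding w)⟩

theorem prod_norm_sq_eq_abs_norm [Fintype ι] (hcx : ∀ i, σ i ≠ (starRingEnd ℂ).comp (σ i))
    (hσ : ∀ φ : K →+* ℂ, ∃! i, φ = σ i ∨ φ = (starRingEnd ℂ).comp (σ i)) (x : K) :
    ∏ i, ‖σ i x‖ ^ 2 = |(Algebra.norm ℚ x : ℝ)| := by
  rw [← Rat.cast_abs, ← prod_eq_abs_norm]
  refine Fintype.prod_bijective _ (bijective_mk_of_existsUnique hσ) _ _ fun i ↦ ?_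
  have hreal : ¬(mk (σ i)).IsReal :=
    fun h ↦ hcx i (ComplexEmbedding.isReal_iff.mp (isReal_mk_iff.mp h)).symm
  rw [apply, mult, if_neg hreal]

end InfinitePlace

end NumberField

theorem received_lattice_min_distance_general
    (F : Type*) [Field F] [NumberField F] (k : ℕ)
    (σ : Fin k → (F →+* ℂ))
    (hcx : ∀ i, σ i ≠ (starRingEnd ℂ).comp (σ i))
    (hσ : ∀ φ : F →+* ℂ, ∃! i : Fin k, φ = σ i ∨ φ = (starRingEnd ℂ).comp (σ i))
    (αb ρb : ℝ) (hρ : 0 < ρb) (h : Fin k → ℂ)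
    (x : 𝓞 F) (hx : x ≠ 0) :
    ∑ i, (1 / ρb + ‖h i‖ ^ 2) * (αb * ‖σ i (x : F)‖) ^ 2
      ≥ αb ^ 2 * k * ∏ i, (1 / ρb + ‖h i‖ ^ 2) ^ ((1 : ℝ) / k) := by
  have hpow : (αb ^ 2) ^ k ≤ ∏ i, (αb * ‖σ i (x : F)‖) ^ 2 := by
    simp only [mul_pow, prod_mul_distrib, prod_const, card_univ, Fintype.card_fin,
      InfinitePlace.prod_norm_sq_eq_abs_norm hcx hσ]
    refine le_mul_of_one_le_right (by positivity) ?_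
    exact_mod_cast RingOfIntegers.one_le_abs_norm hx
  have amgm := Real.card_mul_mul_prod_rpow_le_sum_mul (a := fun i ↦ 1 / ρb + ‖h i‖ ^ 2)
    (b := fun i ↦ (αb * ‖σ i (x : F)‖) ^ 2) (fun i ↦ by positivity) (fun i ↦ by positivity)
    (sq_nonneg αb) (by simpa using hpow)
  simpa [mul_comm] using amgm

/-- Let `F` be a totally complex number field of degree `2k`,
`Λ_b = α_b ψ(O_F) ⊂ ℂᵏ`, and `R = diag(R₁,…,R_k)` with `|R_i|² = 1/ρ_b + |h_i|²`. Then
for every nonzero `x ∈ O_F` (hence every nonzero point `λ = α_b ψ(x)` of `Λ_b`),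
`∑ᵢ |R_i λ_i|² ≥ α_b² k ∏ᵢ (1/ρ_b + |h_i|²)^(1/k)`; that is, the minimum distance of the
received lattice satisfies `d_R² ≥ α_b² k ∏ᵢ (1/ρ_b + |h_i|²)^(1/k)`. -/
theorem received_lattice_min_distance
    (F : Type*) [Field F] [NumberField F] (k : ℕ) (hk : 0 < k)
    (σ : Fin k → (F →+* ℂ))
    (hdeg : Module.finrank ℚ F = 2 * k)
    (hcx : ∀ i, σ i ≠ (starRingEnd ℂ).comp (σ i))
    (hσ : ∀ φ : F →+* ℂ, ∃! i : Fin k, φ = σ i ∨ φ = (starRingEnd ℂ).comp (σ i))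
    (αb ρb : ℝ) (hρ : 0 < ρb) (h : Fin k → ℂ)
    (x : 𝓞 F) (hx : x ≠ 0) :
    ∑ i, (1 / ρb + ‖h i‖ ^ 2) * (αb * ‖σ i (x : F)‖) ^ 2
      ≥ αb ^ 2 * k * ∏ i, (1 / ρb + ‖h i‖ ^ 2) ^ ((1 : ℝ) / k) :=
  received_lattice_min_distance_general F k σ hcx hσ αb ρb hρ h x hx
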